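/- arXiv:2602.19633 — 3 statements merged into one kernel-verified Lean document; each statement's English description precedes it below -/
import Mathlib

section
/- Let ε_p, ε_s, δ_b, δ_r, α, p be real numbers in [0,1] satisfying the strict inequality (1-ε_p)·δ_b > ε_p·δ_r, and assume ε_s > 0, α·p > 0, and T ≥ 1 is a natural number. Set ε' := (1-α·p)·ε_s. Then ((1-ε_p)(1-ε'·δ_b) + ε_p·ε'·δ_r)^T > ((1-ε_p)(1-ε_s·δ_b) + ε_p·ε_s·δ_r)^T, provided the quantity (1-ε_p)(1-ε_s·δ_b) + ε_p·ε_s·δ_r is nonnegative. -/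
/-!
The per-step success quantity `(1 - εp) * (1 - ε * δb) + εp * (ε * δr)` is affine in the
sampling error `ε` with slope `εp * δr - (1 - εp) * δb`, which the strict condition makes
negative. Plan-and-Act strictly lowers the error, `(1 - α * p) * εs < εs`, so it strictly raises
the per-step quantity, and `x ↦ x ^ T` is strictly increasing on `[0, ∞)` for `T ≥ 1`.
-/

theorem step_success_strictAnti {εp δb δr : ℝ} (h : εp * δr < (1 - εp) * δb) :
    StrictAnti fun ε : ℝ => (1 - εp) * (1 - ε * δb) + εp * (ε * δr) := by
  intro a b hab
  have hdiff : ((1 - εp) * (1 - a * δb) + εp * (a * δr)) -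
      ((1 - εp) * (1 - b * δb) + εp * (b * δr)) = (b - a) * ((1 - εp) * δb - εp * δr) := by ring
  linarith [mul_pos (sub_pos.2 hab) (sub_pos.2 h)]

theorem effective_error_lt {εs α p : ℝ} (hεs : 0 < εs) (hαp : 0 < α * p) :
    (1 - α * p) * εs < εs := by
  linarith [mul_pos hαp hεs]

theorem pa_gt_react_general (εp εs δb δr α p : ℝ)
    (hcond : (1 - εp) * δb > εp * δr)
    (hεs0 : εs > 0) (hαp : α * p > 0)
    (T : ℕ) (hT : 1 ≤ T)
    (hnonneg : 0 ≤ (1 - εp) * (1 - εs * δb) + εp * (εs * δr)) :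
    ((1 - εp) * (1 - ((1 - α * p) * εs) * δb) + εp * (((1 - α * p) * εs) * δr)) ^ T >
      ((1 - εp) * (1 - εs * δb) + εp * (εs * δr)) ^ T :=
  pow_lt_pow_left₀ (step_success_strictAnti hcond (effective_error_lt hεs0 hαp)) hnonneg
    (by omega)

/-- Strict improvement of Plan-and-Act over ReAct: under the strict condition
`(1-ε_p)·δ_b > ε_p·δ_r`, with `ε_s > 0` and `α·p > 0`, the Plan-and-Act bound
with effective sampling error `ε' = (1-α·p)·ε_s` is strictly larger than the
ReAct bound, provided the ReAct per-step quantity is nonnegative. -/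
theorem pa_gt_react (εp εs δb δr α p : ℝ)
    (hεp : εp ∈ Set.Icc (0 : ℝ) 1) (hεs : εs ∈ Set.Icc (0 : ℝ) 1)
    (hδb : δb ∈ Set.Icc (0 : ℝ) 1) (hδr : δr ∈ Set.Icc (0 : ℝ) 1)
    (hα : α ∈ Set.Icc (0 : ℝ) 1) (hp : p ∈ Set.Icc (0 : ℝ) 1)
    (hcond : (1 - εp) * δb > εp * δr)
    (hεs0 : εs > 0) (hαp : α * p > 0)
    (T : ℕ) (hT : 1 ≤ T)
    (hnonneg : 0 ≤ (1 - εp) * (1 - εs * δb) + εp * (εs * δr)) :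
    ((1 - εp) * (1 - ((1 - α * p) * εs) * δb) + εp * (((1 - α * p) * εs) * δr)) ^ T >
      ((1 - εp) * (1 - εs * δb) + εp * (εs * δr)) ^ T :=
  pa_gt_react_general εp εs δb δr α p hcond hεs0 hαp T hT hnonneg
end

section
/- Let ε_p, ε_s, δ_b, δ_r, α, p be real numbers in [0,1] satisfying (1-ε_p)·δ_b ≥ ε_p·δ_r, let T ≥ 1 be a natural number, let d : {0,1,…,T-1} → ℕ satisfy d(t) ≥ 1 for all t, and set ε' := (1-α·p)·ε_s. Then U_ours ≥ U_PA ≥ U_ReAct, where U_ours := ∏_{t=0}^{T-1} (1 - ε_p^{d(t)}), U_PA := ((1-ε_p)(1-ε'·δ_b) + ε_p·ε'·δ_r)^T, and U_ReAct := ((1-ε_p)(1-ε_s·δ_b) + ε_p·ε_s·δ_r)^T. -/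
/-! Each per-step bound `(1 - ε_p)(1 - ε δ_b) + ε_p ε δ_r` is affine in the sampling error `ε`
with slope `-((1 - ε_p) δ_b - ε_p δ_r) ≤ 0`, so shrinking `ε_s` to `ε' ≤ ε_s` can only help, and
at best (`ε = 0`) it equals `1 - ε_p`. TAPE does at least that well at every step, since
`ε_p ^ d ≤ ε_p` for `d ≥ 1`. -/

open Set

def stepSuccess (εp δb δr ε : ℝ) : ℝ :=
  (1 - εp) * (1 - ε * δb) + εp * (ε * δr)

section stepSuccess

variable {εp δb δr : ℝ}

theorem stepSuccess_zero : stepSuccess εp δb δr 0 = 1 - εp := by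
  simp [stepSuccess]

theorem stepSuccess_antitone (hcond : (1 - εp) * δb ≥ εp * δr) :
    Antitone (stepSuccess εp δb δr) := by
  intro x y hxy
  have hslope : 0 ≤ (y - x) * ((1 - εp) * δb - εp * δr) :=
    mul_nonneg (sub_nonneg.2 hxy) (sub_nonneg.2 hcond)
  unfold stepSuccess
  linarith

theorem stepSuccess_nonneg (hεp : εp ∈ Icc (0 : ℝ) 1) (hδb : δb ≤ 1) (hδr : 0 ≤ δr)
    {ε : ℝ} (hε : ε ∈ Icc (0 : ℝ) 1) : 0 ≤ stepSuccess εp δb δr ε := by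
  have hεδb : ε * δb ≤ 1 := by nlinarith [hε.1, hε.2]
  unfold stepSuccess
  have := mul_nonneg (sub_nonneg.2 hεp.2) (sub_nonneg.2 hεδb)
  have := mul_nonneg hεp.1 (mul_nonneg hε.1 hδr)
  linarith

end stepSuccess

theorem one_sub_mul_mul_mem_Icc {a b x : ℝ} (ha : a ∈ Icc (0 : ℝ) 1) (hb : b ∈ Icc (0 : ℝ) 1)
    (hx : 0 ≤ x) : (1 - a * b) * x ∈ Icc 0 x := by
  have hab : 1 - a * b ∈ Icc (0 : ℝ) 1 :=
    Icc.mem_iff_one_sub_mem.mp (unitInterval.mul_mem ha hb)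
  exact ⟨mul_nonneg hab.1 hx, mul_le_of_le_one_left hx hab.2⟩

theorem one_sub_pow_le_prod_one_sub_pow {x : ℝ} (hx : x ∈ Icc (0 : ℝ) 1) {T : ℕ} {d : ℕ → ℕ}
    (hd : ∀ t < T, 1 ≤ d t) : (1 - x) ^ T ≤ ∏ t ∈ Finset.range T, (1 - x ^ d t) := by
  rw [Finset.pow_eq_prod_const]
  refine Finset.prod_le_prod (fun _ _ ↦ sub_nonneg.2 hx.2) fun t ht ↦ ?_
  have := pow_le_of_le_one hx.1 hx.2 (Nat.one_le_iff_ne_zero.mp (hd t (Finset.mem_range.mp ht)))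
  linarith

theorem ours_ge_pa_ge_react_general (εp εs δb δr α p : ℝ)
    (hεp : εp ∈ Set.Icc (0 : ℝ) 1) (hεs : εs ∈ Set.Icc (0 : ℝ) 1)
    (hδb : δb ∈ Set.Icc (0 : ℝ) 1) (hδr : δr ∈ Set.Icc (0 : ℝ) 1)
    (hα : α ∈ Set.Icc (0 : ℝ) 1) (hp : p ∈ Set.Icc (0 : ℝ) 1)
    (hcond : (1 - εp) * δb ≥ εp * δr)
    (T : ℕ)
    (d : ℕ → ℕ) (hd : ∀ t < T, 1 ≤ d t) :
    (∏ t ∈ Finset.range T, (1 - εp ^ d t)) ≥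
        ((1 - εp) * (1 - ((1 - α * p) * εs) * δb) +
          εp * (((1 - α * p) * εs) * δr)) ^ T ∧
      ((1 - εp) * (1 - ((1 - α * p) * εs) * δb) +
          εp * (((1 - α * p) * εs) * δr)) ^ T ≥
        ((1 - εp) * (1 - εs * δb) + εp * (εs * δr)) ^ T := by
  set f := stepSuccess εp δb δr
  have hε' := one_sub_mul_mul_mem_Icc hα hp hεs.1
  have hf : Antitone f := stepSuccess_antitone hcond
  have hf_nonneg {ε : ℝ} (hε : ε ∈ Icc (0 : ℝ) 1) : 0 ≤ f ε :=
    stepSuccess_nonneg hεp hδb.2 hδr.1 hε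
  have hε'_unit : (1 - α * p) * εs ∈ Icc (0 : ℝ) 1 := ⟨hε'.1, hε'.2.trans hεs.2⟩
  refine ⟨?_, pow_le_pow_left₀ (hf_nonneg hεs) (hf hε'.2) T⟩
  calc f ((1 - α * p) * εs) ^ T ≤ f 0 ^ T := pow_le_pow_left₀ (hf_nonneg hε'_unit) (hf hε'.1) T
    _ = (1 - εp) ^ T := by rw [show f 0 = 1 - εp from stepSuccess_zero]
    _ ≤ ∏ t ∈ Finset.range T, (1 - εp ^ d t) := one_sub_pow_le_prod_one_sub_pow hεp hd

/-- TAPE dominates Plan-and-Act which dominates ReAct: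
`U_ours ≥ U_PA ≥ U_ReAct`, where `U_ours = ∏_{t<T} (1 - ε_p^{d(t)})`,
`U_PA = ((1-ε_p)(1-ε'·δ_b) + ε_p·ε'·δ_r)^T` with `ε' = (1-α·p)·ε_s`, and
`U_ReAct = ((1-ε_p)(1-ε_s·δ_b) + ε_p·ε_s·δ_r)^T`. -/
theorem ours_ge_pa_ge_react (εp εs δb δr α p : ℝ)
    (hεp : εp ∈ Set.Icc (0 : ℝ) 1) (hεs : εs ∈ Set.Icc (0 : ℝ) 1)
    (hδb : δb ∈ Set.Icc (0 : ℝ) 1) (hδr : δr ∈ Set.Icc (0 : ℝ) 1)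
    (hα : α ∈ Set.Icc (0 : ℝ) 1) (hp : p ∈ Set.Icc (0 : ℝ) 1)
    (hcond : (1 - εp) * δb ≥ εp * δr)
    (T : ℕ) (hT : 1 ≤ T)
    (d : ℕ → ℕ) (hd : ∀ t < T, 1 ≤ d t) :
    (∏ t ∈ Finset.range T, (1 - εp ^ d t)) ≥
        ((1 - εp) * (1 - ((1 - α * p) * εs) * δb) +
          εp * (((1 - α * p) * εs) * δr)) ^ T ∧
      ((1 - εp) * (1 - ((1 - α * p) * εs) * δb) +
          εp * (((1 - α * p) * εs) * δr)) ^ T ≥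
        ((1 - εp) * (1 - εs * δb) + εp * (εs * δr)) ^ T :=
  ours_ge_pa_ge_react_general εp εs δb δr α p hεp hεs hδb hδr hα hp hcond T d hd
end

section
/- Let ε_p, ε, δ_b, δ_r be real numbers with 0 < ε_p < 1 and ε, δ_b, δ_r ∈ [0,1], satisfying (1-ε_p)·δ_b ≥ ε_p·δ_r, and let d ≥ 1 be a natural number. Then 1 - ε_p^d = (1-ε_p)(1-ε·δ_b) + ε_p·ε·δ_r holds if and only if d = 1 and ε·((1-ε_p)·δ_b - ε_p·δ_r) = 0. -/
/-! The gap between the two probabilities is `(ε_p - ε_p^d) + ε·((1-ε_p)·δ_b - ε_p·δ_r)`, a sum of two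
nonnegative terms, so it vanishes iff both do; the first vanishes iff `d = 1` since `0 < ε_p < 1`. -/

theorem pow_eq_self_iff₀ {M₀ : Type*} [MonoidWithZero M₀] [LinearOrder M₀] [PosMulStrictMono M₀]
    [ZeroLEOneClass M₀] {a : M₀} (ha₀ : 0 < a) (ha₁ : a ≠ 1) {n : ℕ} :
    a ^ n = a ↔ n = 1 := by
  simpa only [pow_one] using pow_right_inj₀ (n := 1) ha₀ ha₁

theorem tape_per_step_eq_iff_general (εp ε δb δr : ℝ)
    (hεp0 : 0 < εp) (hεp1 : εp < 1)
    (hε : ε ∈ Set.Icc (0 : ℝ) 1)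
    (hcond : (1 - εp) * δb ≥ εp * δr)
    (d : ℕ) (hd : 1 ≤ d) :
    1 - εp ^ d = (1 - εp) * (1 - ε * δb) + εp * (ε * δr) ↔
      d = 1 ∧ ε * ((1 - εp) * δb - εp * δr) = 0 := by
  have hgap : 1 - εp ^ d - ((1 - εp) * (1 - ε * δb) + εp * (ε * δr)) =
      (εp - εp ^ d) + ε * ((1 - εp) * δb - εp * δr) := by ring
  have hpow : 0 ≤ εp - εp ^ d :=
    sub_nonneg.2 (pow_le_of_le_one hεp0.le hεp1.le (by omega))
  have hdev : 0 ≤ ε * ((1 - εp) * δb - εp * δr) := mul_nonneg hε.1 (sub_nonneg.2 hcond)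
  rw [← sub_eq_zero, hgap, add_eq_zero_iff_of_nonneg hpow hdev, sub_eq_zero, eq_comm,
    pow_eq_self_iff₀ hεp0 hεp1.ne]

/-- Equality characterization between the TAPE per-step viable-action
probability `1 - ε_p^d` and the per-step probability
`(1-ε_p)(1-ε·δ_b) + ε_p·ε·δ_r`: they coincide iff `d = 1` and
`ε·((1-ε_p)·δ_b - ε_p·δ_r) = 0`. -/
theorem tape_per_step_eq_iff (εp ε δb δr : ℝ)
    (hεp0 : 0 < εp) (hεp1 : εp < 1)
    (hε : ε ∈ Set.Icc (0 : ℝ) 1) (hδb : δb ∈ Set.Icc (0 : ℝ) 1)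
    (hδr : δr ∈ Set.Icc (0 : ℝ) 1)
    (hcond : (1 - εp) * δb ≥ εp * δr)
    (d : ℕ) (hd : 1 ≤ d) :
    1 - εp ^ d = (1 - εp) * (1 - ε * δb) + εp * (ε * δr) ↔
      d = 1 ∧ ε * ((1 - εp) * δb - εp * δr) = 0 :=
  tape_per_step_eq_iff_general εp ε δb δr hεp0 hεp1 hε hcond d hd
end
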